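/- Let a be a regular ambiguity of elements of G^{[Σ]} and suppose there exist g1^{[β1]}, g2^{[β2]} ∈ G^{[Σ]} and a mixed monomial m ∈ M(A) such that sig(g2 m β1) ≄ sig(β2 m g1) and SIG(a) is reducible by max(sig(g2 m β1), −sig(β2 m g1)) (i.e., SIG(a) equals a term times this signature times a word). Then a is covered by the trivial syzygy g2 m β1 − β2 m g1, and S-Pol(a) can be discarded after adding this trivial syzygy to the set H. -/

import Mathlib

/-!  Signature Gröbner bases in the mixed algebra `R[x₁,…,x_k]⟨y₁,…,y_n⟩`
over a principal ideal domain `R`, following Hofstadler–Verron. -/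

open Finsupp

/-- A mixed monomial `v·w`, with `v` a commutative monomial in `x₁,…,x_k`
(recorded by its exponent vector) and `w` a word in the noncommutative
variables `y₁,…,y_n`. -/
@[ext]
structure MMon (k n : ℕ) where
  c : Fin k →₀ ℕ
  w : FreeMonoid (Fin n)

namespace MMon

instance (k n : ℕ) : One (MMon k n) := ⟨⟨0, 1⟩⟩
noncomputable instance (k n : ℕ) : Mul (MMon k n) := ⟨fun a b => ⟨a.c + b.c, a.w * b.w⟩⟩

@[simp] lemma mul_c {k n : ℕ} (a b : MMon k n) : (a * b).c = a.c + b.c := rfl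
@[simp] lemma mul_w {k n : ℕ} (a b : MMon k n) : (a * b).w = a.w * b.w := rfl
@[simp] lemma one_c {k n : ℕ} : (1 : MMon k n).c = 0 := rfl
@[simp] lemma one_w {k n : ℕ} : (1 : MMon k n).w = 1 := rfl

noncomputable instance (k n : ℕ) : Monoid (MMon k n) where
  mul_assoc a b c := by ext : 1 <;> simp [add_assoc, mul_assoc]
  one_mul a := by ext : 1 <;> simp
  mul_one a := by ext : 1 <;> simp

end MMon

/-- A module monomial `u·a·ε_i·b` of the free bimodule `Σ = (A ⊗_{R[X]} A)^r`. -/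
@[ext]
structure ModMon (k n r : ℕ) where
  u : Fin k →₀ ℕ
  a : FreeMonoid (Fin n)
  i : Fin r
  b : FreeMonoid (Fin n)

instance {k n r : ℕ} [NeZero r] : Inhabited (ModMon k n r) := ⟨⟨0, 1, default, 1⟩⟩

/-- The mixed algebra `A = R[x₁,…,x_k]⟨y₁,…,y_n⟩`, realised as the monoid
algebra of the monoid of mixed monomials. -/
abbrev MixedAlg (R : Type) [CommRing R] (k n : ℕ) : Type := MonoidAlgebra R (MMon k n)

/-- The free `A`-bimodule `Σ = (A ⊗_{R[X]} A)^r`, realised as the free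
`R`-module on the module monomials `u·a·ε_i·b`. -/
abbrev SigModule (R : Type) [CommRing R] (k n r : ℕ) : Type := ModMon k n r →₀ R

section Defs

variable {R : Type} [CommRing R] {k n r : ℕ}

/-- The term `c·m` of `A` (an element of `T(A)` when `c ≠ 0`). -/
noncomputable def trm (m : MMon k n) (c : R) : MixedAlg R k n := MonoidAlgebra.single m c

/-- The word `b ∈ ⟨Y⟩`, viewed as an element of `A`. -/
noncomputable def wrd (b : FreeMonoid (Fin n)) : MixedAlg R k n :=
  MonoidAlgebra.single ⟨0, b⟩ 1

/-- Multiplication `m·σ` of a module monomial by a mixed monomial on the left. -/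
noncomputable def mulL (m : MMon k n) (σ : ModMon k n r) : ModMon k n r :=
  ⟨m.c + σ.u, m.w * σ.a, σ.i, σ.b⟩

/-- Multiplication `σ·m` of a module monomial by a mixed monomial on the right. -/
noncomputable def mulR (σ : ModMon k n r) (m : MMon k n) : ModMon k n r :=
  ⟨σ.u + m.c, σ.a, σ.i, σ.b * m.w⟩

/-- The two-sided multiple `m·σ·b` of a module monomial by a mixed monomial `m`
on the left and a word `b` on the right. -/
noncomputable def mulLR (m : MMon k n) (σ : ModMon k n r) (b : FreeMonoid (Fin n)) : ModMon k n r :=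
  ⟨m.c + σ.u, m.w * σ.a, σ.i, σ.b * b⟩

/-- The left action of `A` on the bimodule `Σ`. -/
noncomputable def actL (f : MixedAlg R k n) (α : SigModule R k n r) : SigModule R k n r :=
  Finsupp.sum f.coeff fun m cm => Finsupp.sum α fun σ cσ => Finsupp.single (mulL m σ) (cm * cσ)

/-- The right action of `A` on the bimodule `Σ`. -/
noncomputable def actR (α : SigModule R k n r) (f : MixedAlg R k n) : SigModule R k n r :=
  Finsupp.sum f.coeff fun m cm => Finsupp.sum α fun σ cσ => Finsupp.single (mulR σ m) (cσ * cm)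

/-- The two-sided multiple `t·α·b` of `α ∈ Σ` by the term `t = c·m` on the left
and the word `b` on the right. -/
noncomputable def scaleLR (m : MMon k n) (c : R) (α : SigModule R k n r)
    (b : FreeMonoid (Fin n)) : SigModule R k n r :=
  Finsupp.sum α fun σ cσ => Finsupp.single (mulLR m σ b) (c * cσ)

/-- The `A`-bimodule homomorphism `Σ → A`, `α ↦ ᾱ`, sending `ε_i` to `f_i`
(where `F i = f_i` are the generators). -/
noncomputable def barMap (F : Fin r → MixedAlg R k n) (α : SigModule R k n r) :
    MixedAlg R k n :=
  Finsupp.sum α fun σ cσ =>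
    trm ⟨σ.u, σ.a⟩ cσ * F σ.i * wrd σ.b

/-- The basis vector `ε_i` of `Σ`. -/
noncomputable def epsMod (i : Fin r) : SigModule R k n r :=
  Finsupp.single ⟨0, 1, i, 1⟩ 1

/-- The labeled module `I^{[Σ]}`: pairs `f^{[α]}` with `ᾱ = f`. -/
def Labeled (F : Fin r → MixedAlg R k n) (p : MixedAlg R k n × SigModule R k n r) : Prop :=
  barMap F p.2 = p.1

/-- A syzygy of `I^{[Σ]}`: an element `α ∈ Σ` with `ᾱ = 0`. -/
def IsSyzygy (F : Fin r → MixedAlg R k n) (γ : SigModule R k n r) : Prop :=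
  barMap F γ = 0

section Orders

variable [LinearOrder (MMon k n)] [LinearOrder (ModMon k n r)]

/-- The leading monomial of `f ∈ A` (with `LM 0 = ⊥`). -/
noncomputable def LMb (f : MixedAlg R k n) : WithBot (MMon k n) := f.coeff.support.max

/-- The leading monomial of `f ∈ A` (defaulting to `1` for `f = 0`). -/
noncomputable def LMd (f : MixedAlg R k n) : MMon k n := (f.coeff.support.max).unbotD 1

/-- The leading coefficient of `f ∈ A` (`0` for `f = 0`). -/
noncomputable def LC (f : MixedAlg R k n) : R := f.coeff (LMd f)

/-- The leading term of `f ∈ A`, as an element of `A` (`0` for `f = 0`). -/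
noncomputable def LTerm (f : MixedAlg R k n) : MixedAlg R k n := trm (LMd f) (LC f)

/-- The signature monomial of `α ∈ Σ` (with `⊥` for `α = 0`): the `⪯`-largest
monomial of the support of `α`. -/
noncomputable def sigb (α : SigModule R k n r) : WithBot (ModMon k n r) := α.support.max

variable [NeZero r]

/-- The signature monomial of `α ∈ Σ`, defaulting for `α = 0`. -/
noncomputable def sigMd (α : SigModule R k n r) : ModMon k n r :=
  (α.support.max).unbotD default

/-- The coefficient of the signature of `α`. -/
noncomputable def sigC (α : SigModule R k n r) : R := α (sigMd α)

/-- The signature `sig(α)` of `α ∈ Σ`, as a term, i.e. a single-term element of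
`Σ` (`0` for `α = 0`).  Equality `sig α = sig β` of signatures as *terms* is
`sigT α = sigT β`; the relation `sig α ≃ sig β` is `sigb α = sigb β`; the
relation `sig α ≺ sig β` is `sigb α < sigb β`. -/
noncomputable def sigT (α : SigModule R k n r) : SigModule R k n r :=
  Finsupp.single (sigMd α) (sigC α)

end Orders

/-- The compatibility requirements on the chosen monomial ordering on `M(A)`
and module ordering on `M(Σ)`: both are compatible with multiplication,
both are well-orderings, and they are compatible with each other. -/
structure IsOrderSetting (k n r : ℕ) [LinearOrder (MMon k n)]
    [LinearOrder (ModMon k n r)] : Prop where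
  mon_wf : WellFounded ((· < ·) : MMon k n → MMon k n → Prop)
  mod_wf : WellFounded ((· < ·) : ModMon k n r → ModMon k n r → Prop)
  mon_mul : ∀ a b m m' : MMon k n, m ≤ m' → a * m * b ≤ a * m' * b
  mod_mul : ∀ (m : MMon k n) (b : FreeMonoid (Fin n)) (σ τ : ModMon k n r),
      σ ≤ τ → mulLR m σ b ≤ mulLR m τ b
  compat₁ : ∀ (u v : Fin k →₀ ℕ) (a b : FreeMonoid (Fin n)) (i : Fin r),
      (⟨u, a⟩ : MMon k n) < ⟨v, b⟩ ↔ (⟨u, a, i, 1⟩ : ModMon k n r) < ⟨v, b, i, 1⟩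
  compat₂ : ∀ (u v : Fin k →₀ ℕ) (a b : FreeMonoid (Fin n)) (i : Fin r),
      (⟨u, a⟩ : MMon k n) < ⟨v, b⟩ ↔ (⟨u, 1, i, a⟩ : ModMon k n r) < ⟨v, 1, i, b⟩

end Defs

/-! ### Ambiguities -/

/-- `WordAmb a b c d p q` says that `(a ⊗ b, c ⊗ d, p, q)` is an ambiguity
(overlap, inclusion or external) of the words `p` and `q`. -/
inductive WordAmb {n : ℕ} :
    FreeMonoid (Fin n) → FreeMonoid (Fin n) → FreeMonoid (Fin n) → FreeMonoid (Fin n) →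
    FreeMonoid (Fin n) → FreeMonoid (Fin n) → Prop
  | overlap₁ (a b p q : FreeMonoid (Fin n)) (h : a * p = q * b)
      (ha : a ≠ 1) (hb : b ≠ 1) (hla : a.length < q.length) (hlb : b.length < p.length) :
      WordAmb a 1 1 b p q
  | overlap₂ (a b p q : FreeMonoid (Fin n)) (h : p * a = b * q)
      (ha : a ≠ 1) (hb : b ≠ 1) (hla : a.length < q.length) (hlb : b.length < p.length) :
      WordAmb 1 a b 1 p q
  | inclusion₁ (a b p q : FreeMonoid (Fin n)) (h : p = a * q * b) :
      WordAmb 1 1 a b p q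
  | inclusion₂ (a b p q : FreeMonoid (Fin n)) (h : a * p * b = q) :
      WordAmb a b 1 1 p q
  | external₁ (m p q : FreeMonoid (Fin n)) :
      WordAmb 1 (m * q) (p * m) 1 p q
  | external₂ (m p q : FreeMonoid (Fin n)) :
      WordAmb (q * m) 1 1 (m * p) p q

section Amb

variable {R : Type} [CommRing R] {k n r : ℕ}
variable [LinearOrder (MMon k n)] [LinearOrder (ModMon k n r)]

/-- `IsAmb f g m₁ n₁ m₂ n₂` says that `(m₁ ⊗ n₁, m₂ ⊗ n₂)` is an ambiguity of the
(nonzero) polynomials `f` and `g`: an ambiguity of the word parts of their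
leading monomials, with left cofactors completed by `lcm(u,v)/u` resp.
`lcm(u,v)/v` on the commutative parts. -/
def IsAmb (f g : MixedAlg R k n) (m₁ : MMon k n) (n₁ : FreeMonoid (Fin n))
    (m₂ : MMon k n) (n₂ : FreeMonoid (Fin n)) : Prop :=
  ∃ a b c d : FreeMonoid (Fin n),
    WordAmb a b c d (LMd f).w (LMd g).w ∧
    m₁ = ⟨((LMd f).c ⊔ (LMd g).c) - (LMd f).c, a⟩ ∧ n₁ = b ∧
    m₂ = ⟨((LMd f).c ⊔ (LMd g).c) - (LMd g).c, c⟩ ∧ n₂ = d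

/-- The leading monomial `LM(a) = LM(m₁ f n₁) = LM(m₂ g n₂)` of an ambiguity. -/
noncomputable def ambLM (f : MixedAlg R k n) (m₁ : MMon k n) (n₁ : FreeMonoid (Fin n)) :
    MMon k n :=
  m₁ * LMd f * ⟨0, n₁⟩

variable [IsDomain R] [GCDMonoid R]

/-- The cofactor `lcmlc(f,g)/LC(f)`. -/
noncomputable def cofL (f g : MixedAlg R k n) : R :=
  Classical.choose (dvd_lcm_left (LC f) (LC g))

/-- The cofactor `lcmlc(f,g)/LC(g)`. -/
noncomputable def cofR (f g : MixedAlg R k n) : R :=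
  Classical.choose (dvd_lcm_right (LC f) (LC g))

variable [NeZero r]

/-- The signature `SIG(a) = max(sig(c_f m₁ α n₁), −sig(c_g m₂ β n₂))` (first in
case of tie) of an ambiguity `a = (m₁ ⊗ n₁, m₂ ⊗ n₂)` of `f^{[α]]`, `g^{[β]}`,
as a term (single-term element) of `Σ`. -/
noncomputable def ambSIG (f g : MixedAlg R k n) (α β : SigModule R k n r)
    (m₁ : MMon k n) (n₁ : FreeMonoid (Fin n)) (m₂ : MMon k n) (n₂ : FreeMonoid (Fin n)) :
    SigModule R k n r :=
  if sigb (scaleLR m₂ (cofR f g) β n₂) ≤ sigb (scaleLR m₁ (cofL f g) α n₁) then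
    sigT (scaleLR m₁ (cofL f g) α n₁)
  else
    - sigT (scaleLR m₂ (cofR f g) β n₂)

/-- An ambiguity is regular if `sig(m₁ α n₁) ≄ sig(m₂ β n₂)`. -/
def RegAmb (α β : SigModule R k n r) (m₁ : MMon k n) (n₁ : FreeMonoid (Fin n))
    (m₂ : MMon k n) (n₂ : FreeMonoid (Fin n)) : Prop :=
  sigb (scaleLR m₁ (1 : R) α n₁) ≠ sigb (scaleLR m₂ (1 : R) β n₂)

/-- An ambiguity is singular if `sig(c_f m₁ α n₁) = sig(c_g m₂ β n₂)`. -/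
def SingAmb (f g : MixedAlg R k n) (α β : SigModule R k n r) (m₁ : MMon k n)
    (n₁ : FreeMonoid (Fin n)) (m₂ : MMon k n) (n₂ : FreeMonoid (Fin n)) : Prop :=
  sigT (scaleLR m₁ (cofL f g) α n₁) = sigT (scaleLR m₂ (cofR f g) β n₂)

/-- The polynomial part of the S-polynomial of an ambiguity. -/
noncomputable def SPolP (f g : MixedAlg R k n) (m₁ : MMon k n) (n₁ : FreeMonoid (Fin n))
    (m₂ : MMon k n) (n₂ : FreeMonoid (Fin n)) : MixedAlg R k n :=
  trm m₁ (cofL f g) * f * wrd n₁ - trm m₂ (cofR f g) * g * wrd n₂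

/-- The module part of the S-polynomial of an ambiguity. -/
noncomputable def SPolM (f g : MixedAlg R k n) (α β : SigModule R k n r) (m₁ : MMon k n)
    (n₁ : FreeMonoid (Fin n)) (m₂ : MMon k n) (n₂ : FreeMonoid (Fin n)) :
    SigModule R k n r :=
  scaleLR m₁ (cofL f g) α n₁ - scaleLR m₂ (cofR f g) β n₂

/-- The polynomial part of the G-polynomial of an ambiguity, w.r.t. Bézout
coefficients `c`, `d`. -/
noncomputable def GPolP (c d : R) (f g : MixedAlg R k n) (m₁ : MMon k n)
    (n₁ : FreeMonoid (Fin n)) (m₂ : MMon k n) (n₂ : FreeMonoid (Fin n)) : MixedAlg R k n :=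
  trm m₁ c * f * wrd n₁ + trm m₂ d * g * wrd n₂

/-- The module part of the G-polynomial of an ambiguity, w.r.t. Bézout
coefficients `c`, `d`. -/
noncomputable def GPolM (c d : R) (α β : SigModule R k n r) (m₁ : MMon k n)
    (n₁ : FreeMonoid (Fin n)) (m₂ : MMon k n) (n₂ : FreeMonoid (Fin n)) :
    SigModule R k n r :=
  scaleLR m₁ c α n₁ + scaleLR m₂ d β n₂

/-- `BezoutFor c d f g`: `c, d` are Bézout coefficients for `LC f`, `LC g`. -/
def BezoutFor (c d : R) (f g : MixedAlg R k n) : Prop :=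
  c * LC f + d * LC g = gcd (LC f) (LC g)

end Amb

/-! ### Reductions, bases, cover -/

section Red

variable {R : Type} [CommRing R] {k n r : ℕ}
variable [LinearOrder (MMon k n)] [LinearOrder (ModMon k n r)]

/-- `f^{[α]}` is (top) sig-reducible by `G`: there are `g^{[β]} ∈ G`, a term
`t = c·m` and a word `b` with `LT(t g b) = LT(f) > LT(f - t g b)` and
`sig(t β b) ⪯ sig(α)`. -/
def SigReducible (G : Set (MixedAlg R k n × SigModule R k n r))
    (f : MixedAlg R k n) (α : SigModule R k n r) : Prop :=
  ∃ g β, (g, β) ∈ G ∧ ∃ (m : MMon k n) (c : R) (b : FreeMonoid (Fin n)), c ≠ 0 ∧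
    LTerm (trm m c * g * wrd b) = LTerm f ∧
    LMb (f - trm m c * g * wrd b) < LMb f ∧
    sigb (scaleLR m c β b) ≤ sigb α

/-- `f^{[α]}` is regular sig-reducible by `G`. -/
def RegSigReducible (G : Set (MixedAlg R k n × SigModule R k n r))
    (f : MixedAlg R k n) (α : SigModule R k n r) : Prop :=
  ∃ g β, (g, β) ∈ G ∧ ∃ (m : MMon k n) (c : R) (b : FreeMonoid (Fin n)), c ≠ 0 ∧
    LTerm (trm m c * g * wrd b) = LTerm f ∧
    LMb (f - trm m c * g * wrd b) < LMb f ∧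
    sigb (scaleLR m c β b) < sigb α

/-- `f^{[α]}` is super reducible by `G`: there are `g^{[β]} ∈ G`, a term `t` and
a word `b` with `sig(α) = sig(t β b)` (as terms) and `LM(f) = LM(t g b)`. -/
def SuperReducible [NeZero r] (G : Set (MixedAlg R k n × SigModule R k n r))
    (f : MixedAlg R k n) (α : SigModule R k n r) : Prop :=
  ∃ g β, (g, β) ∈ G ∧ ∃ (m : MMon k n) (c : R) (b : FreeMonoid (Fin n)), c ≠ 0 ∧
    sigT α = sigT (scaleLR m c β b) ∧
    LMb f = LMb (trm m c * g * wrd b)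

/-- `α ∈ Σ` is (top) reducible by the set `H ⊆ Σ`: `sig(α) = sig(t γ b)` for
some `γ ∈ H`, term `t` and word `b`. -/
def ModReducible [NeZero r] (H : Set (SigModule R k n r)) (α : SigModule R k n r) : Prop :=
  ∃ γ ∈ H, ∃ (m : MMon k n) (c : R) (b : FreeMonoid (Fin n)), c ≠ 0 ∧
    sigT α = sigT (scaleLR m c γ b)

/-- `G` is a (strong) signature Gröbner basis of `I^{[Σ]}`. -/
def IsSigGB (F : Fin r → MixedAlg R k n) (G : Set (MixedAlg R k n × SigModule R k n r)) :
    Prop :=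
  ∀ f α, barMap F α = f → f ≠ 0 → SigReducible G f α

/-- `G` is a signature Gröbner basis of `I^{[Σ]}` up to (module monomial)
signature `σ`. -/
def IsSigGBUpTo (F : Fin r → MixedAlg R k n)
    (G : Set (MixedAlg R k n × SigModule R k n r)) (σ : WithBot (ModMon k n r)) : Prop :=
  ∀ f α, barMap F α = f → f ≠ 0 → sigb α < σ → SigReducible G f α

/-- `H` is a syzygy basis of `I^{[Σ]}`. -/
def IsSyzBasis [NeZero r] (F : Fin r → MixedAlg R k n) (H : Set (SigModule R k n r)) :
    Prop :=
  ∀ γ, IsSyzygy F γ → γ ≠ 0 → ModReducible H γ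

variable [IsDomain R] [GCDMonoid R] [NeZero r]

/-- `G` is complete: the G-polynomials (w.r.t. non-singular Bézout coefficients)
of all ambiguities of `G` are sig-reducible by `G`. -/
def CompleteSet (G : Set (MixedAlg R k n × SigModule R k n r)) : Prop :=
  ∀ g₁ β₁ g₂ β₂, (g₁, β₁) ∈ G → (g₂, β₂) ∈ G →
    ∀ m₁ n₁ m₂ n₂, IsAmb g₁ g₂ m₁ n₁ m₂ n₂ →
      ∀ c d, BezoutFor c d g₁ g₂ →
        sigb (GPolM c d β₁ β₂ m₁ n₁ m₂ n₂) = sigb (ambSIG g₁ g₂ β₁ β₂ m₁ n₁ m₂ n₂) →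
        SigReducible G (GPolP c d g₁ g₂ m₁ n₁ m₂ n₂) (GPolM c d β₁ β₂ m₁ n₁ m₂ n₂)

/-- `MonLcm σ₁ σ₂ τ`: the least common multiple `lcm(σ₁,σ₂)` of the module
monomials `σ₁ = u₁a₁ε_jb₁`, `σ₂ = u₂a₂ε_jb₂` is defined and equals `τ`. -/
def MonLcm (σ₁ σ₂ τ : ModMon k n r) : Prop :=
  σ₁.i = σ₂.i ∧ τ.i = σ₁.i ∧ τ.u = σ₁.u ⊔ σ₂.u ∧
  ((τ.a = σ₁.a ∧ ∃ s, σ₁.a = s * σ₂.a) ∨ (τ.a = σ₂.a ∧ ∃ s, σ₂.a = s * σ₁.a)) ∧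
  ((τ.b = σ₁.b ∧ ∃ s, σ₁.b = σ₂.b * s) ∨ (τ.b = σ₂.b ∧ ∃ s, σ₂.b = σ₁.b * s))

/-- `H` is sig-complete: all sig-Combinations of elements of `H` are reducible
by `H`. -/
def SigCompleteSet (H : Set (SigModule R k n r)) : Prop :=
  ∀ γ₁ ∈ H, ∀ γ₂ ∈ H, ∀ τ, MonLcm (sigMd γ₁) (sigMd γ₂) τ →
    ∀ (m₁ : MMon k n) (b₁ : FreeMonoid (Fin n)) (m₂ : MMon k n) (b₂ : FreeMonoid (Fin n)),
      mulLR m₁ (sigMd γ₁) b₁ = τ → mulLR m₂ (sigMd γ₂) b₂ = τ →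
      ∀ c d : R, c * sigC γ₁ + d * sigC γ₂ = gcd (sigC γ₁) (sigC γ₂) →
        ModReducible H (scaleLR m₁ c γ₁ b₁ + scaleLR m₂ d γ₂ b₂)

/-- The ambiguity `a` (of `g₁^{[β₁]}`, `g₂^{[β₂]}`), with signature `SIG(a)` and
leading monomial `LM(a)`, is covered by `(G, H)`: there are `g^{[β]} ∈ G`,
`γ ∈ H`, terms `t, t'` (possibly `0`) and words `b, b'` with
`SIG(a) = sig(t β b) + sig(t' γ b')` and `LM(t g b) < LM(a)`. -/
def CoveredBy (G : Set (MixedAlg R k n × SigModule R k n r))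
    (H : Set (SigModule R k n r)) (Sig : SigModule R k n r) (Lm : MMon k n) : Prop :=
  ∃ g β, (g, β) ∈ G ∧ ∃ γ ∈ H,
    ∃ (m : MMon k n) (c : R) (b : FreeMonoid (Fin n))
      (m' : MMon k n) (c' : R) (b' : FreeMonoid (Fin n)),
      Sig = sigT (scaleLR m c β b) + sigT (scaleLR m' c' γ b') ∧
      LMb (trm m c * g * wrd b) < (Lm : WithBot (MMon k n))

end Red

/-! Because `α ↦ ᾱ` is a bimodule homomorphism, `g₂ m β₁ − β₂ m g₁` maps to
`g₂ m g₁ − g₂ m g₁ = 0`. Since the two signatures are not similar, no cancellation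
happens at the top, so the signature of this syzygy is `max(sig(g₂ m β₁), −sig(β₂ m g₁))`.
Multiplying by a term and a word commutes with taking signatures, because the module
ordering is compatible with multiplication; hence `SIG(a)` is the signature of a multiple of
the syzygy, and `a` is covered using the zero multiple of an element of `G`. -/

section Actions

variable {R : Type} [CommRing R] {k n r : ℕ}

noncomputable def barHom (F : Fin r → MixedAlg R k n) : SigModule R k n r →+ MixedAlg R k n :=
  Finsupp.liftAddHom fun σ =>
    (AddMonoidHom.mulRight (wrd σ.b)).comp <| (AddMonoidHom.mulRight (F σ.i)).comp <|
      MonoidAlgebra.singleAddHom ⟨σ.u, σ.a⟩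

lemma barHom_apply (F : Fin r → MixedAlg R k n) (α : SigModule R k n r) :
    barHom F α = barMap F α :=
  rfl

lemma barMap_sub (F : Fin r → MixedAlg R k n) (α β : SigModule R k n r) :
    barMap F (α - β) = barMap F α - barMap F β :=
  map_sub (barHom F) α β

lemma barMap_single (F : Fin r → MixedAlg R k n) (σ : ModMon k n r) (c : R) :
    barMap F (Finsupp.single σ c) = trm ⟨σ.u, σ.a⟩ c * F σ.i * wrd σ.b :=
  (Finsupp.liftAddHom_apply_single _ σ c : barHom F _ = _)

lemma commute_trm_of_w_eq_one (u : Fin k →₀ ℕ) (c : R) (f : MixedAlg R k n) :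
    Commute (trm ⟨u, 1⟩ c) f :=
  MonoidAlgebra.single_commute (fun m => by ext : 1 <;> simp [add_comm]) (.all c) f

lemma barMap_single_mulL (F : Fin r → MixedAlg R k n) (m : MMon k n) (σ : ModMon k n r)
    (c d : R) :
    barMap F (Finsupp.single (mulL m σ) (c * d)) = trm m c * barMap F (Finsupp.single σ d) := by
  simp only [barMap_single, mulL, trm, ← mul_assoc, MonoidAlgebra.single_mul_single]
  rfl

lemma barMap_single_mulR (F : Fin r → MixedAlg R k n) (σ : ModMon k n r) (m : MMon k n)
    (c d : R) :
    barMap F (Finsupp.single (mulR σ m) (d * c)) = barMap F (Finsupp.single σ d) * trm m c := by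
  have hσ : trm (⟨σ.u + m.c, σ.a⟩ : MMon k n) (d * c) = trm ⟨σ.u, σ.a⟩ d * trm ⟨m.c, 1⟩ c := by
    rw [trm, trm, trm, MonoidAlgebra.single_mul_single]
    congr 1
    ext : 1 <;> simp
  have hb : wrd (σ.b * m.w) = (wrd σ.b * wrd m.w : MixedAlg R k n) := by
    rw [wrd, wrd, wrd, MonoidAlgebra.single_mul_single, mul_one]
    rfl
  have hm : trm m c = trm ⟨m.c, 1⟩ c * (wrd m.w : MixedAlg R k n) := by
    rw [trm, trm, wrd, MonoidAlgebra.single_mul_single, mul_one]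
    congr 1
    ext : 1 <;> simp
  have hcomm := commute_trm_of_w_eq_one (n := n) m.c c
  simp only [barMap_single, mulR, hσ, hb, hm, mul_assoc]
  rw [(hcomm _).left_comm, (hcomm _).left_comm]

lemma barMap_actL (F : Fin r → MixedAlg R k n) (f : MixedAlg R k n) (α : SigModule R k n r) :
    barMap F (actL f α) = f * barMap F α := by
  conv_rhs => rw [← MonoidAlgebra.sum_coeff_single f]
  rw [← barHom_apply, actL, map_finsuppSum, Finsupp.sum_mul]
  refine Finsupp.sum_congr fun m _ => ?_
  rw [map_finsuppSum, barMap, Finsupp.mul_sum]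
  refine Finsupp.sum_congr fun σ _ => ?_
  rw [barHom_apply, barMap_single_mulL, barMap_single]
  simp only [mul_assoc]
  rfl

lemma barMap_actR (F : Fin r → MixedAlg R k n) (α : SigModule R k n r) (f : MixedAlg R k n) :
    barMap F (actR α f) = barMap F α * f := by
  conv_rhs => rw [← MonoidAlgebra.sum_coeff_single f]
  rw [← barHom_apply, actR, map_finsuppSum, Finsupp.mul_sum]
  refine Finsupp.sum_congr fun m _ => ?_
  rw [map_finsuppSum, barMap, Finsupp.sum_mul]
  refine Finsupp.sum_congr fun σ _ => ?_
  rw [barHom_apply, barMap_single_mulR, barMap_single]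
  rfl

lemma isSyzygy_actL_sub_actR (F : Fin r → MixedAlg R k n) {g₁ g₂ : MixedAlg R k n}
    {β₁ β₂ : SigModule R k n r} (hβ₁ : barMap F β₁ = g₁) (hβ₂ : barMap F β₂ = g₂)
    (f : MixedAlg R k n) : IsSyzygy F (actL (g₂ * f) β₁ - actR β₂ (f * g₁)) := by
  rw [IsSyzygy, barMap_sub, barMap_actL, barMap_actR, hβ₁, hβ₂, mul_assoc, sub_self]

lemma mulLR_injective (m : MMon k n) (b : FreeMonoid (Fin n)) :
    Function.Injective fun σ : ModMon k n r => mulLR m σ b := by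
  intro σ τ h
  simp only [mulLR, ModMon.mk.injEq] at h
  obtain ⟨hu, ha, hi, hb⟩ := h
  ext : 1
  exacts [add_left_cancel hu, mul_left_cancel ha, hi, mul_right_cancel hb]

lemma scaleLR_eq_mapDomain (m : MMon k n) (c : R) (α : SigModule R k n r)
    (b : FreeMonoid (Fin n)) :
    scaleLR m c α b = Finsupp.mapDomain (fun σ => mulLR m σ b) (c • α) := by
  rw [scaleLR, Finsupp.mapDomain, Finsupp.sum_smul_index fun _ => Finsupp.single_zero _]

end Actions

section Signature

variable {R : Type} [CommRing R] {k n r : ℕ} [LinearOrder (ModMon k n r)]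

lemma sigb_neg (α : SigModule R k n r) : sigb (-α) = sigb α := by
  rw [sigb, sigb, Finsupp.support_neg]

variable [NeZero r]

lemma sigMd_eq_max' {α : SigModule R k n r} (hα : α ≠ 0) :
    sigMd α = α.support.max' (Finsupp.support_nonempty_iff.2 hα) := by
  rw [sigMd, ← Finset.coe_max' (Finsupp.support_nonempty_iff.2 hα)]
  rfl

lemma coe_sigMd {α : SigModule R k n r} (hα : α ≠ 0) :
    (sigMd α : WithBot (ModMon k n r)) = sigb α := by
  rw [sigMd_eq_max' hα, Finset.coe_max' (Finsupp.support_nonempty_iff.2 hα), sigb]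

lemma sigMd_mem_support {α : SigModule R k n r} (hα : α ≠ 0) : sigMd α ∈ α.support :=
  Finset.mem_of_max (coe_sigMd hα).symm

lemma sigT_eq_of_max_eq {α β : SigModule R k n r} (hmax : α.support.max = β.support.max)
    (hc : α (sigMd β) = β (sigMd β)) : sigT α = sigT β := by
  have hM : sigMd α = sigMd β := by simp only [sigMd, hmax]
  rw [sigT, sigT, sigC, sigC, hM, hc]

lemma sigT_single (σ : ModMon k n r) (c : R) : sigT (Finsupp.single σ c) = Finsupp.single σ c := by
  rcases eq_or_ne c 0 with rfl | hc
  · simp [sigT, sigC]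
  · have hM : sigMd (Finsupp.single σ c) = σ := by
      rw [sigMd, Finsupp.support_single σ hc]
      rfl
    rw [sigT, sigC, hM, Finsupp.single_eq_same]

lemma sigT_sigT (α : SigModule R k n r) : sigT (sigT α) = sigT α :=
  sigT_single _ _

lemma sigT_neg (α : SigModule R k n r) : sigT (-α) = -sigT α := by
  have hM : sigMd (-α) = sigMd α := by simp only [sigMd, Finsupp.support_neg]
  rw [sigT, sigT, sigC, sigC, hM, Finsupp.neg_apply, Finsupp.single_neg]

lemma sigT_smul [IsDomain R] (c : R) (α : SigModule R k n r) :
    sigT (c • α) = c • sigT α := by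
  rcases eq_or_ne c 0 with rfl | hc
  · simp [sigT, sigC]
  · have hmax : (c • α).support.max = α.support.max := by rw [Finsupp.support_smul_eq hc]
    have hM : sigMd (c • α) = sigMd α := by simp only [sigMd, hmax]
    rw [sigT, sigT, sigC, sigC, hM, Finsupp.smul_apply, Finsupp.smul_single]

lemma sigT_add_of_sigb_lt {α β : SigModule R k n r} (h : sigb β < sigb α) :
    sigT (α + β) = sigT α := by
  have hα : α ≠ 0 := by
    rintro rfl
    exact not_lt_bot h
  have hβ : β (sigMd α) = 0 := by
    refine Finsupp.notMem_support_iff.1 fun hmem => (Finset.le_max hmem).not_gt ?_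
    rwa [coe_sigMd hα]
  have hval : (α + β) (sigMd α) = α (sigMd α) := by rw [Finsupp.add_apply, hβ, add_zero]
  refine sigT_eq_of_max_eq (le_antisymm ?_ ?_) hval
  · calc (α + β).support.max ≤ (α.support ∪ β.support).max := Finset.max_mono Finsupp.support_add
      _ = α.support.max := by rw [Finset.max_union]; exact sup_eq_left.2 h.le
  · have hmem : sigMd α ∈ (α + β).support := by
      rw [Finsupp.mem_support_iff, hval]
      exact Finsupp.mem_support_iff.1 (sigMd_mem_support hα)
    rw [← sigb, ← coe_sigMd hα]
    exact Finset.le_max hmem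

lemma sigT_sub_of_sigb_ne {α β : SigModule R k n r} (h : sigb α ≠ sigb β) :
    sigT (α - β) = if sigb β ≤ sigb α then sigT α else -sigT β := by
  split_ifs with hle
  · rw [sub_eq_add_neg, sigT_add_of_sigb_lt ((sigb_neg β).symm ▸ lt_of_le_of_ne hle h.symm)]
  · rw [← neg_sub, sigT_neg, sub_eq_add_neg,
      sigT_add_of_sigb_lt ((sigb_neg α).symm ▸ not_le.1 hle)]

lemma sigT_mapDomain {g : ModMon k n r → ModMon k n r} (hg : StrictMono g)
    (α : SigModule R k n r) : sigT (Finsupp.mapDomain g α) = Finsupp.mapDomain g (sigT α) := by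
  classical
  rcases eq_or_ne α 0 with rfl | hα
  · simp [sigT, sigC]
  have hsupp : (Finsupp.mapDomain g α).support = α.support.image g :=
    Finsupp.mapDomain_support_of_injective hg.injective α
  have hα' : Finsupp.mapDomain g α ≠ 0 := by
    rw [← Finsupp.support_nonempty_iff, hsupp]
    exact (Finsupp.support_nonempty_iff.2 hα).image g
  have hM : sigMd (Finsupp.mapDomain g α) = g (sigMd α) := by
    simp only [sigMd_eq_max' hα', sigMd_eq_max' hα, hsupp, Finset.max'_image hg.monotone]
  rw [sigT, sigT, Finsupp.mapDomain_single, sigC, sigC, hM,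
    Finsupp.mapDomain_apply hg.injective]

lemma sigT_scaleLR_sigT [IsDomain R] {m : MMon k n} {b : FreeMonoid (Fin n)}
    (hmono : Monotone fun σ : ModMon k n r => mulLR m σ b) (c : R) (α : SigModule R k n r) :
    sigT (scaleLR m c (sigT α) b) = sigT (scaleLR m c α b) := by
  have hg := hmono.strictMono_of_injective (mulLR_injective m b)
  rw [scaleLR_eq_mapDomain, scaleLR_eq_mapDomain, sigT_mapDomain hg, sigT_mapDomain hg,
    sigT_smul, sigT_smul, sigT_sigT]

end Signature

lemma coveredBy_of_eq_sigT_scaleLR {R : Type} [CommRing R] {k n r : ℕ}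
    [LinearOrder (MMon k n)] [LinearOrder (ModMon k n r)] [NeZero r]
    {G : Set (MixedAlg R k n × SigModule R k n r)}
    {H : Set (SigModule R k n r)} {g : MixedAlg R k n} {β γ : SigModule R k n r}
    (hg : (g, β) ∈ G) (hγ : γ ∈ H) {Sig : SigModule R k n r} {Lm : MMon k n}
    {m : MMon k n} {c : R} {b : FreeMonoid (Fin n)} (h : Sig = sigT (scaleLR m c γ b)) :
    CoveredBy G H Sig Lm := by
  refine ⟨g, β, hg, γ, hγ, 1, 0, 1, m, c, b, ?_, ?_⟩
  · simp [h, scaleLR_eq_mapDomain, sigT, sigC]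
  · rw [trm, MonoidAlgebra.single_zero, zero_mul, zero_mul]
    exact WithBot.bot_lt_coe Lm

theorem f5_criterion_general
    {R : Type} [CommRing R] [IsDomain R] [GCDMonoid R]
    {k n r : ℕ} [NeZero r]
    [LinearOrder (MMon k n)] [LinearOrder (ModMon k n r)]
    (hord : IsOrderSetting k n r)
    (F : Fin r → MixedAlg R k n)
    (G : Set (MixedAlg R k n × SigModule R k n r))
    (H : Set (SigModule R k n r))
    (hGI : ∀ p ∈ G, Labeled F p)
    -- the regular ambiguity `a` of elements of `G`
    (gA gB : MixedAlg R k n) (βA βB : SigModule R k n r)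
    (M₁ : MMon k n) (N₁ : FreeMonoid (Fin n)) (M₂ : MMon k n) (N₂ : FreeMonoid (Fin n))
    -- the elements producing the trivial syzygy
    (g₁ g₂ : MixedAlg R k n) (β₁ β₂ : SigModule R k n r)
    (hg₁ : (g₁, β₁) ∈ G) (hg₂ : (g₂, β₂) ∈ G)
    (m : MMon k n)
    (hne : sigb (actL (g₂ * trm m 1) β₁) ≠ sigb (actR β₂ (trm m 1 * g₁)))
    -- `SIG(a)` is reducible by `max(sig(g₂ m β₁), −sig(β₂ m g₁))`
    (hdvd : ∃ (m' : MMon k n) (c' : R) (b' : FreeMonoid (Fin n)), c' ≠ 0 ∧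
        ambSIG gA gB βA βB M₁ N₁ M₂ N₂ =
          sigT (scaleLR m' c'
            (if sigb (actR β₂ (trm m 1 * g₁)) ≤ sigb (actL (g₂ * trm m 1) β₁) then
              sigT (actL (g₂ * trm m 1) β₁)
            else
              - sigT (actR β₂ (trm m 1 * g₁))) b')) :
    IsSyzygy F (actL (g₂ * trm m 1) β₁ - actR β₂ (trm m 1 * g₁)) ∧
    CoveredBy G (insert (actL (g₂ * trm m 1) β₁ - actR β₂ (trm m 1 * g₁)) H)
      (ambSIG gA gB βA βB M₁ N₁ M₂ N₂) (ambLM gA M₁ N₁) := by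
  obtain ⟨m', c', b', -, hSIG⟩ := hdvd
  rw [← sigT_sub_of_sigb_ne hne, sigT_scaleLR_sigT fun σ τ => hord.mod_mul m' b' σ τ] at hSIG
  exact ⟨isSyzygy_actL_sub_actR F (hGI _ hg₁) (hGI _ hg₂) (trm m 1),
    coveredBy_of_eq_sigT_scaleLR hg₁ (Set.mem_insert _ H) hSIG⟩

/-- Corollary 6.3: the F5 criterion.  Let `a` be a regular
ambiguity of elements of `G` and suppose there are `g₁^{[β₁]}, g₂^{[β₂]} ∈ G`
and a mixed monomial `m` with `sig(g₂ m β₁) ≄ sig(β₂ m g₁)` and `SIG(a)`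
reducible by `max(sig(g₂ m β₁), −sig(β₂ m g₁))`.  Then `a` is covered by the
trivial syzygy `g₂ m β₁ − β₂ m g₁` (so `S-Pol(a)` can be discarded after
adding this trivial syzygy to `H`). -/
theorem f5_criterion
    {R : Type} [CommRing R] [IsDomain R] [IsPrincipalIdealRing R] [GCDMonoid R]
    {k n r : ℕ} [NeZero r]
    [LinearOrder (MMon k n)] [LinearOrder (ModMon k n r)]
    (hord : IsOrderSetting k n r)
    (F : Fin r → MixedAlg R k n)
    (G : Set (MixedAlg R k n × SigModule R k n r))
    (H : Set (SigModule R k n r))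
    (hGI : ∀ p ∈ G, Labeled F p)
    (hHsyz : ∀ γ ∈ H, IsSyzygy F γ)
    -- the regular ambiguity `a` of elements of `G`
    (gA gB : MixedAlg R k n) (βA βB : SigModule R k n r)
    (hgA : (gA, βA) ∈ G) (hgB : (gB, βB) ∈ G)
    (M₁ : MMon k n) (N₁ : FreeMonoid (Fin n)) (M₂ : MMon k n) (N₂ : FreeMonoid (Fin n))
    (ha : IsAmb gA gB M₁ N₁ M₂ N₂) (hreg : RegAmb βA βB M₁ N₁ M₂ N₂)
    -- the elements producing the trivial syzygy
    (g₁ g₂ : MixedAlg R k n) (β₁ β₂ : SigModule R k n r)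
    (hg₁ : (g₁, β₁) ∈ G) (hg₂ : (g₂, β₂) ∈ G)
    (m : MMon k n)
    (hne : sigb (actL (g₂ * trm m 1) β₁) ≠ sigb (actR β₂ (trm m 1 * g₁)))
    -- `SIG(a)` is reducible by `max(sig(g₂ m β₁), −sig(β₂ m g₁))`
    (hdvd : ∃ (m' : MMon k n) (c' : R) (b' : FreeMonoid (Fin n)), c' ≠ 0 ∧
        ambSIG gA gB βA βB M₁ N₁ M₂ N₂ =
          sigT (scaleLR m' c'
            (if sigb (actR β₂ (trm m 1 * g₁)) ≤ sigb (actL (g₂ * trm m 1) β₁) then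
              sigT (actL (g₂ * trm m 1) β₁)
            else
              - sigT (actR β₂ (trm m 1 * g₁))) b')) :
    IsSyzygy F (actL (g₂ * trm m 1) β₁ - actR β₂ (trm m 1 * g₁)) ∧
    CoveredBy G (insert (actL (g₂ * trm m 1) β₁ - actR β₂ (trm m 1 * g₁)) H)
      (ambSIG gA gB βA βB M₁ N₁ M₂ N₂) (ambLM gA M₁ N₁) :=
  f5_criterion_general hord F G H hGI gA gB βA βB M₁ N₁ M₂ N₂ g₁ g₂ β₁ β₂ hg₁ hg₂ m hne hdvd
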